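/- arXiv:math/0204095 — 2 statements merged into one kernel-verified Lean document; each statement's English description precedes it below -/
import Mathlib

section
/- Let E be a directed graph, W its set of singular vertices (sinks and infinite emitters), V = E⁰ \ W, and let B : V × V → ℤ, C : V × W → ℤ count edges. Let G be the cokernel of the map (Bᵗ − I, Cᵗ) : ℤ^V → ℤ^V ⊕ ℤ^W, and for v ∈ E⁰ write [δ_v] for the class of the standard basis vector. If g : E⁰ → ℝ≥0 is a graph trace (i.e., g(v) = Σ_{e ∈ s⁻¹(v)} g(r(e)) for all nonsingular v, and g(v) ≥ Σᵢ g(r(eᵢ)) for every infinite emitter v and every finite set of edges e₁,…,eₙ ∈ s⁻¹(v)), then the induced homomorphism f : G → ℝ with f([δ_v]) = g(v) maps the subsemigroup Γ generated by { [δ_v] : v ∈ E⁰ } ∪ { [δ_v] − Σ_{e ∈ S} [δ_{r(e)}] : v an infinite emitter, S ⊆ s⁻¹(v) finite } into ℝ≥0. -/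
open Finsupp

section GraphK

/- A directed graph whose vertex set is partitioned as `V ⊕ W`, where `W` is the set of
singular vertices (sinks and infinite emitters) and `V` the nonsingular vertices:
each `v : V` emits finitely many (and at least one) edges. -/
variable {V W E : Type} (s r : E → V ⊕ W) [∀ v : V, Fintype {e : E // s e = Sum.inl v}]

/-- The standard basis vector `δ_u` of `ℤ^V ⊕ ℤ^W`. -/
noncomputable def delta : V ⊕ W → (V →₀ ℤ) × (W →₀ ℤ) :=
  Sum.elim (fun v => (Finsupp.single v 1, 0)) (fun w => ((0 : V →₀ ℤ), Finsupp.single w 1))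

/-- The map `(Bᵗ - I, Cᵗ) : ℤ^V → ℤ^V ⊕ ℤ^W`, sending
`δ_v ↦ Σ_{e ∈ s⁻¹(v)} δ_{r e} - δ_v` for nonsingular `v`. -/
noncomputable def graphK : (V →₀ ℤ) →+ (V →₀ ℤ) × (W →₀ ℤ) :=
  Finsupp.liftAddHom (fun v => zmultiplesHom _
    ((∑ e : {e : E // s e = Sum.inl v}, delta (r e)) - delta (Sum.inl v)))

/-- The generating set of the semigroup `Γ` in the cokernel `G`:
the classes `[δ_u]`, `u ∈ E⁰`, together with the elements
`[δ_w] - Σ_{e ∈ S} [δ_{r e}]` for `w` an infinite emitter and `S ⊆ s⁻¹(w)` finite. -/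
noncomputable def gammaGens :
    Set (((V →₀ ℤ) × (W →₀ ℤ)) ⧸ (graphK s r).range) :=
  (Set.range fun u : V ⊕ W => (QuotientAddGroup.mk (delta u) :
      ((V →₀ ℤ) × (W →₀ ℤ)) ⧸ (graphK s r).range)) ∪
  {x | ∃ (w : W) (S : Finset E), Infinite {e : E // s e = Sum.inr w} ∧
      (∀ e ∈ S, s e = Sum.inr w) ∧
      x = QuotientAddGroup.mk (delta (Sum.inr w) - ∑ e ∈ S, delta (r e))}

end GraphK

theorem AddMonoidHom.nonneg_of_mem_closure {M N : Type*} [AddMonoid M] [AddCommMonoid N]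
    [PartialOrder N] [IsOrderedAddMonoid N] (f : M →+ N) {s : Set M}
    (hs : ∀ x ∈ s, 0 ≤ f x) : ∀ z ∈ AddSubmonoid.closure s, 0 ≤ f z := by
  intro z hz
  induction hz using AddSubmonoid.closure_induction with
  | mem x hx => exact hs x hx
  | zero => exact (map_zero f).ge
  | add x y _ _ hx hy => rw [map_add]; exact add_nonneg hx hy

theorem QuotientAddGroup.map_mk_sub_sum {M G ι κ : Type*} [AddCommGroup M] [AddCommGroup G]
    {N : AddSubgroup M} {f : M ⧸ N →+ G} {d : ι → M} {g : ι → G}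
    (hf : ∀ i, f (QuotientAddGroup.mk (d i)) = g i) (i : ι) (S : Finset κ) (r : κ → ι) :
    f (QuotientAddGroup.mk (d i - ∑ k ∈ S, d (r k))) = g i - ∑ k ∈ S, g (r k) := by
  change (f.comp (QuotientAddGroup.mk' N)) _ = _
  simp only [map_sub, map_sum, AddMonoidHom.comp_apply, QuotientAddGroup.mk'_apply, hf]

theorem map_gammaGens_nonneg {V W E : Type} {s r : E → V ⊕ W}
    [∀ v : V, Fintype {e : E // s e = Sum.inl v}] {g : V ⊕ W → ℝ} (hg0 : ∀ u, 0 ≤ g u)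
    (hbound : ∀ w : W, Infinite {e : E // s e = Sum.inr w} →
      ∀ S : Finset E, (∀ e ∈ S, s e = Sum.inr w) → ∑ e ∈ S, g (r e) ≤ g (Sum.inr w))
    {f : (((V →₀ ℤ) × (W →₀ ℤ)) ⧸ (graphK s r).range) →+ ℝ}
    (hf : ∀ u, f (QuotientAddGroup.mk (delta u)) = g u) :
    ∀ x ∈ gammaGens s r, 0 ≤ f x := by
  rintro x (⟨u, rfl⟩ | ⟨w, S, hinf, hS, rfl⟩)
  · rw [hf]
    exact hg0 u
  · rw [QuotientAddGroup.map_mk_sub_sum hf]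
    exact sub_nonneg.mpr (hbound w hinf S hS)

/-- if `g` is a graph trace, then the homomorphism `f` on the cokernel
`G = coker (Bᵗ - I, Cᵗ)` with `f([δ_u]) = g(u)` maps the subsemigroup `Γ` generated by
`{[δ_u]} ∪ {[δ_w] - Σ_{e ∈ S}[δ_{r e}] : w infinite emitter, S ⊆ s⁻¹(w) finite}`
into `ℝ≥0`. -/
theorem stmt3 (V W E : Type) [Countable V] [Countable W] [Countable E]
    (s r : E → V ⊕ W) [∀ v : V, Fintype {e : E // s e = Sum.inl v}]
    (hV : ∀ v : V, Nonempty {e : E // s e = Sum.inl v})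
    (hW : ∀ w : W, IsEmpty {e : E // s e = Sum.inr w} ∨ Infinite {e : E // s e = Sum.inr w})
    (g : V ⊕ W → ℝ) (hg0 : ∀ u, 0 ≤ g u)
    (htrace : ∀ v : V, g (Sum.inl v) = ∑ e : {e : E // s e = Sum.inl v}, g (r e))
    (hbound : ∀ w : W, Infinite {e : E // s e = Sum.inr w} →
      ∀ S : Finset E, (∀ e ∈ S, s e = Sum.inr w) →
        ∑ e ∈ S, g (r e) ≤ g (Sum.inr w))
    (f : (((V →₀ ℤ) × (W →₀ ℤ)) ⧸ (graphK s r).range) →+ ℝ)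
    (hf : ∀ u : V ⊕ W, f (QuotientAddGroup.mk (delta u)) = g u) :
    ∀ z ∈ AddSubmonoid.closure (gammaGens s r), 0 ≤ f z :=
  f.nonneg_of_mem_closure (map_gammaGens_nonneg hg0 hbound hf)
end

section
/- Let E be a directed graph, W its set of singular vertices, V = E⁰ \ W, and B, C the corresponding edge-count matrices. Let G = coker((Bᵗ − I, Cᵗ) : ℤ^V → ℤ^V ⊕ ℤ^W). Suppose g : E⁰ → ℝ≥0 satisfies: (1) g(v) = Σ_{e ∈ s⁻¹(v)} g(r(e)) for every nonsingular vertex v, and (2) g(v) ≥ Σ_{e ∈ S} g(r(e)) for every infinite emitter v and finite S ⊆ s⁻¹(v). Then there exists a unique group homomorphism f : G → ℝ with f([δ_v]) = g(v) for all v ∈ E⁰, and f sends the class of every element of ℕ^V ⊕ ℕ^W to a nonnegative real. -/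
/-!
Extend `g` additively to `ℤ^V ⊕ ℤ^W`. The trace identity at a nonsingular vertex `v` says
precisely that this extension kills the generator `Σ_{e ∈ s⁻¹(v)} δ_{r e} - δ_v` of the image
of `(Bᵗ - I, Cᵗ)`, so it descends to the cokernel; it is nonnegative on `ℕ^V ⊕ ℕ^W` because `g`
is. Uniqueness holds because the classes `[δ_u]` generate the cokernel.
-/

open Finsupp

section GraphTrace

variable {V W E : Type}

noncomputable def weightHom (g : V ⊕ W → ℝ) : (V →₀ ℤ) × (W →₀ ℤ) →+ ℝ :=
  (liftAddHom fun v => zmultiplesHom ℝ (g (Sum.inl v))).coprod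
    (liftAddHom fun w => zmultiplesHom ℝ (g (Sum.inr w)))

theorem weightHom_delta (g : V ⊕ W → ℝ) (u : V ⊕ W) : weightHom g (delta u) = g u := by
  cases u <;> simp [weightHom, delta]

theorem weightHom_nonneg {g : V ⊕ W → ℝ} (hg : ∀ u, 0 ≤ g u) {x : (V →₀ ℤ) × (W →₀ ℤ)}
    (hx₁ : ∀ v, 0 ≤ x.1 v) (hx₂ : ∀ w, 0 ≤ x.2 w) : 0 ≤ weightHom g x := by
  simp only [weightHom, AddMonoidHom.coprod_apply, liftAddHom_apply, Finsupp.sum,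
    zmultiplesHom_apply, zsmul_eq_mul]
  exact add_nonneg
    (Finset.sum_nonneg fun v _ => mul_nonneg (by exact_mod_cast hx₁ v) (hg _))
    (Finset.sum_nonneg fun w _ => mul_nonneg (by exact_mod_cast hx₂ w) (hg _))

theorem addMonoidHom_ext_delta {M : Type*} [AddCommMonoid M]
    ⦃f₁ f₂ : (V →₀ ℤ) × (W →₀ ℤ) →+ M⦄ (h : ∀ u, f₁ (delta u) = f₂ (delta u)) : f₁ = f₂ := by
  rw [← f₁.coprod_unique, ← f₂.coprod_unique]
  congr 1
  · exact addHom_ext' fun v => AddMonoidHom.ext_int (by simpa [delta] using h (Sum.inl v))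
  · exact addHom_ext' fun w => AddMonoidHom.ext_int (by simpa [delta] using h (Sum.inr w))

variable (s r : E → V ⊕ W) [∀ v : V, Fintype {e : E // s e = Sum.inl v}]

theorem range_graphK_le_ker_weightHom {g : V ⊕ W → ℝ}
    (htrace : ∀ v : V, g (Sum.inl v) = ∑ e : {e : E // s e = Sum.inl v}, g (r e)) :
    (graphK s r).range ≤ (weightHom g).ker := by
  rw [AddMonoidHom.range_le_ker_iff]
  refine addHom_ext' fun v => AddMonoidHom.ext_int ?_
  simp [graphK, weightHom_delta, ← htrace]

end GraphTrace

/-- if `g : E⁰ → ℝ≥0` is a graph trace, then there is a unique group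
homomorphism `f` on the cokernel `G = coker (Bᵗ - I, Cᵗ)` with `f([δ_u]) = g(u)` for all
vertices `u`, and `f` sends the class of every element of `ℕ^V ⊕ ℕ^W` to a nonnegative real. -/
theorem stmt5 (V W E : Type) [Countable V] [Countable W] [Countable E]
    (s r : E → V ⊕ W) [∀ v : V, Fintype {e : E // s e = Sum.inl v}]
    (hV : ∀ v : V, Nonempty {e : E // s e = Sum.inl v})
    (hW : ∀ w : W, IsEmpty {e : E // s e = Sum.inr w} ∨ Infinite {e : E // s e = Sum.inr w})
    (g : V ⊕ W → ℝ) (hg0 : ∀ u, 0 ≤ g u)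
    (htrace : ∀ v : V, g (Sum.inl v) = ∑ e : {e : E // s e = Sum.inl v}, g (r e))
    (hbound : ∀ w : W, Infinite {e : E // s e = Sum.inr w} →
      ∀ S : Finset E, (∀ e ∈ S, s e = Sum.inr w) →
        ∑ e ∈ S, g (r e) ≤ g (Sum.inr w)) :
    (∃ f : (((V →₀ ℤ) × (W →₀ ℤ)) ⧸ (graphK s r).range) →+ ℝ,
      (∀ u : V ⊕ W, f (QuotientAddGroup.mk (delta u)) = g u) ∧
      (∀ x : (V →₀ ℤ) × (W →₀ ℤ), (∀ v, 0 ≤ x.1 v) → (∀ w, 0 ≤ x.2 w) →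
        0 ≤ f (QuotientAddGroup.mk x))) ∧
    (∀ f₁ f₂ : (((V →₀ ℤ) × (W →₀ ℤ)) ⧸ (graphK s r).range) →+ ℝ,
      (∀ u : V ⊕ W, f₁ (QuotientAddGroup.mk (delta u)) = g u) →
      (∀ u : V ⊕ W, f₂ (QuotientAddGroup.mk (delta u)) = g u) → f₁ = f₂) := by
  refine ⟨⟨QuotientAddGroup.lift _ (weightHom g) (range_graphK_le_ker_weightHom s r htrace),
    fun u => weightHom_delta g u, fun x hx₁ hx₂ => weightHom_nonneg hg0 hx₁ hx₂⟩, ?_⟩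
  intro f₁ f₂ h₁ h₂
  refine QuotientAddGroup.addMonoidHom_ext _ (addMonoidHom_ext_delta fun u => ?_)
  simp [h₁ u, h₂ u]
end
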